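/- For any general source X and any ε, δ ∈ [0,1) satisfying ε + δ < 1, it holds that H̃_{ε,δ}(X) ≤ H̄_{ε+δ}(X). -/
import Mathlib


open Filter MeasureTheory

namespace NY

/-- A probability distribution on a set, given by its point mass function. -/
structure Dist (α : Type*) where
  p : α → ℝ
  nonneg : ∀ x, 0 ≤ p x
  hasSum : HasSum p 1

/-- The probability of a set under a distribution. -/
noncomputable def Dist.pr {α : Type*} (P : Dist α) (A : Set α) : ℝ := ∑' x : A, P.p x.1

/-- 𝒰* : nonempty finite strings over the code alphabet 𝒰 = {1,…,K}. -/
abbrev Word (K : ℕ) := {u : List (Fin K) // u ≠ []}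

/-- Length of a string, as a real number. -/
noncomputable def wlen {K : ℕ} (u : Word K) : ℝ := u.1.length

/-- Error probability of a variable-length code (φ, ψ). -/
noncomputable def errP {α : Type*} {K : ℕ} (P : Dist α) (φ : α → Word K) (ψ : Word K → α) : ℝ :=
  P.pr {x | ψ (φ x) ≠ x}

/-- Overflow probability of an encoder φ with threshold η. -/
noncomputable def ovP {α : Type*} {K : ℕ} (P : Dist α) (φ : α → Word K) (η : ℝ) : ℝ :=
  P.pr {x | wlen (φ x) > η}

/-- A general source: for each blocklength n, a distribution on 𝒳^n. -/
abbrev Source (𝒳 : Type*) := (n : ℕ) → Dist (Fin n → 𝒳)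

/-- The limit as ν ↓ 0 of a function g which is nonincreasing in ν
(the limit exists by monotonicity and equals the supremum over ν > 0). -/
noncomputable def limNu (g : ℝ → ℝ) : ℝ := sSup (g '' Set.Ioi (0 : ℝ))

variable {𝒳 : Type*}

/-- A rate R ≥ 0 is (ε,δ)-achievable. -/
def FirstAch (K : ℕ) (X : Source 𝒳) (ε δ R : ℝ) : Prop :=
  0 ≤ R ∧ ∃ (φ : ∀ n, (Fin n → 𝒳) → Word K) (ψ : ∀ n, Word K → (Fin n → 𝒳)),
    limsup (fun n => errP (X n) (φ n) (ψ n)) atTop ≤ ε ∧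
    limsup (fun n => ovP (X n) (φ n) ((n : ℝ) * R)) atTop ≤ δ

/-- The first-order (ε,δ)-optimum threshold R(ε,δ|X). -/
noncomputable def Ropt (K : ℕ) (X : Source 𝒳) (ε δ : ℝ) : ℝ :=
  sInf {R | FirstAch K X ε δ R}

/-- L is (ε,δ,R)-achievable (second order). -/
def SecondAch (K : ℕ) (X : Source 𝒳) (ε δ R L : ℝ) : Prop :=
  ∃ (φ : ∀ n, (Fin n → 𝒳) → Word K) (ψ : ∀ n, Word K → (Fin n → 𝒳)),
    limsup (fun n => errP (X n) (φ n) (ψ n)) atTop ≤ ε ∧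
    limsup (fun n => ovP (X n) (φ n) ((n : ℝ) * R + Real.sqrt (n : ℝ) * L)) atTop ≤ δ

/-- The second-order (ε,δ,R)-optimum threshold L(ε,δ,R|X). -/
noncomputable def Lopt (K : ℕ) (X : Source 𝒳) (ε δ R : ℝ) : ℝ :=
  sInf {L | SecondAch K X ε δ R L}

/-- A rate R ≥ 0 is optimistically (ε,δ)-achievable. -/
def OptFirstAch (K : ℕ) (X : Source 𝒳) (ε δ R : ℝ) : Prop :=
  0 ≤ R ∧ ∃ (φ : ∀ n, (Fin n → 𝒳) → Word K) (ψ : ∀ n, Word K → (Fin n → 𝒳)),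
    ∀ γ > (0 : ℝ), ∃ ns : ℕ → ℕ, StrictMono ns ∧ ∀ i,
      errP (X (ns i)) (φ (ns i)) (ψ (ns i)) ≤ ε + γ ∧
      ovP (X (ns i)) (φ (ns i)) ((ns i : ℝ) * R) ≤ δ + γ

/-- The optimistic first-order (ε,δ)-optimum threshold R*(ε,δ|X). -/
noncomputable def RoptStar (K : ℕ) (X : Source 𝒳) (ε δ : ℝ) : ℝ :=
  sInf {R | OptFirstAch K X ε δ R}

/-- L is optimistically (ε,δ,R)-achievable. -/
def OptSecondAch (K : ℕ) (X : Source 𝒳) (ε δ R L : ℝ) : Prop :=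
  ∃ (φ : ∀ n, (Fin n → 𝒳) → Word K) (ψ : ∀ n, Word K → (Fin n → 𝒳)),
    ∀ γ > (0 : ℝ), ∃ ns : ℕ → ℕ, StrictMono ns ∧ ∀ i,
      errP (X (ns i)) (φ (ns i)) (ψ (ns i)) ≤ ε + γ ∧
      ovP (X (ns i)) (φ (ns i)) ((ns i : ℝ) * R + Real.sqrt (ns i : ℝ) * L) ≤ δ + γ

/-- The optimistic second-order (ε,δ,R)-optimum threshold L*(ε,δ,R|X). -/
noncomputable def LoptStar (K : ℕ) (X : Source 𝒳) (ε δ R : ℝ) : ℝ :=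
  sInf {L | OptSecondAch K X ε δ R L}

/-- A rate R ≥ 0 is type I (ε,δ)-achievable. -/
def TypeIAch (K : ℕ) (X : Source 𝒳) (ε δ R : ℝ) : Prop :=
  0 ≤ R ∧ ∃ (φ : ∀ n, (Fin n → 𝒳) → Word K) (ψ : ∀ n, Word K → (Fin n → 𝒳)),
    limsup (fun n => errP (X n) (φ n) (ψ n)) atTop ≤ ε ∧
    liminf (fun n => ovP (X n) (φ n) ((n : ℝ) * R)) atTop ≤ δ

/-- R†(ε,δ|X). -/
noncomputable def Rdagger (K : ℕ) (X : Source 𝒳) (ε δ : ℝ) : ℝ :=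
  sInf {R | TypeIAch K X ε δ R}

/-- A rate R ≥ 0 is type II (ε,δ)-achievable. -/
def TypeIIAch (K : ℕ) (X : Source 𝒳) (ε δ R : ℝ) : Prop :=
  0 ≤ R ∧ ∃ (φ : ∀ n, (Fin n → 𝒳) → Word K) (ψ : ∀ n, Word K → (Fin n → 𝒳)),
    liminf (fun n => errP (X n) (φ n) (ψ n)) atTop ≤ ε ∧
    limsup (fun n => ovP (X n) (φ n) ((n : ℝ) * R)) atTop ≤ δ

/-- R‡(ε,δ|X). -/
noncomputable def Rddagger (K : ℕ) (X : Source 𝒳) (ε δ : ℝ) : ℝ :=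
  sInf {R | TypeIIAch K X ε δ R}

/-- H̄_γ(X) := inf{ R : limsup_n Pr{ (1/n) log(1/P_{X^n}(X^n)) > R } ≤ γ }. -/
noncomputable def Hbar (K : ℕ) (X : Source 𝒳) (γ : ℝ) : ℝ :=
  sInf {R | limsup (fun n =>
    (X n).pr {x | Real.logb (K : ℝ) (1 / (X n).p x) / (n : ℝ) > R}) atTop ≤ γ}

/-- H̄*_γ(X) (optimistic version, with liminf). -/
noncomputable def HbarStar (K : ℕ) (X : Source 𝒳) (γ : ℝ) : ℝ :=
  sInf {R | liminf (fun n =>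
    (X n).pr {x | Real.logb (K : ℝ) (1 / (X n).p x) / (n : ℝ) > R}) atTop ≤ γ}

/-- H̄_γ(R|X) := inf{ L : limsup_n Pr{ (1/n) log(1/P_{X^n}(X^n)) > R + L/√n } ≤ γ }. -/
noncomputable def Hbar2 (K : ℕ) (X : Source 𝒳) (γ R : ℝ) : ℝ :=
  sInf {L | limsup (fun n =>
    (X n).pr {x | Real.logb (K : ℝ) (1 / (X n).p x) / (n : ℝ)
      > R + L / Real.sqrt (n : ℝ)}) atTop ≤ γ}

/-- H̄*_γ(R|X) (optimistic version, with liminf). -/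
noncomputable def Hbar2Star (K : ℕ) (X : Source 𝒳) (γ R : ℝ) : ℝ :=
  sInf {L | liminf (fun n =>
    (X n).pr {x | Real.logb (K : ℝ) (1 / (X n).p x) / (n : ℝ)
      > R + L / Real.sqrt (n : ℝ)}) atTop ≤ γ}

/-- F(ε,R) := limsup_n inf_{A : Pr(A) ≥ 1−ε} Pr{ −(1/n) log P_{X^n}(X^n) ≥ R, X^n ∈ A }. -/
noncomputable def Fspec (K : ℕ) (X : Source 𝒳) (ε R : ℝ) : ℝ :=
  limsup (fun n =>
    sInf ((fun A : Set (Fin n → 𝒳) =>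
        (X n).pr (A ∩ {x | -Real.logb (K : ℝ) ((X n).p x) / (n : ℝ) ≥ R})) ''
      {A | (X n).pr A ≥ 1 - ε})) atTop

/-- H̃_{ε,δ}(X) := inf{ R : F(ε,R) ≤ δ }. -/
noncomputable def Htilde (K : ℕ) (X : Source 𝒳) (ε δ : ℝ) : ℝ :=
  sInf {R | Fspec K X ε R ≤ δ}

/-- G_{ε,δ}(X). -/
noncomputable def Gfirst (K : ℕ) (X : Source 𝒳) (ε δ : ℝ) : ℝ :=
  sInf {R | limNu (fun ν => limsup (fun n =>
    sInf ((fun A : Set (Fin n → 𝒳) =>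
        (X n).pr (A ∩ {x | -Real.logb (K : ℝ) ((X n).p x / (X n).pr A) / (n : ℝ) ≥ R})) ''
      {A | (X n).pr A ≥ 1 - ε - ν})) atTop) ≤ δ}

/-- G*_{ε,δ}(X) (optimistic version, with liminf). -/
noncomputable def GfirstStar (K : ℕ) (X : Source 𝒳) (ε δ : ℝ) : ℝ :=
  sInf {R | limNu (fun ν => liminf (fun n =>
    sInf ((fun A : Set (Fin n → 𝒳) =>
        (X n).pr (A ∩ {x | -Real.logb (K : ℝ) ((X n).p x / (X n).pr A) / (n : ℝ) ≥ R})) ''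
      {A | (X n).pr A ≥ 1 - ε - ν})) atTop) ≤ δ}

/-- G_{ε,δ}(R|X). -/
noncomputable def Gsecond (K : ℕ) (X : Source 𝒳) (ε δ R : ℝ) : ℝ :=
  sInf {L | limNu (fun ν => limsup (fun n =>
    sInf ((fun A : Set (Fin n → 𝒳) =>
        (X n).pr (A ∩ {x | -Real.logb (K : ℝ) ((X n).p x / (X n).pr A) / (n : ℝ)
          ≥ R + L / Real.sqrt (n : ℝ)})) ''
      {A | (X n).pr A ≥ 1 - ε - ν})) atTop) ≤ δ}

/-- G*_{ε,δ}(R|X) (optimistic version, with liminf). -/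
noncomputable def GsecondStar (K : ℕ) (X : Source 𝒳) (ε δ R : ℝ) : ℝ :=
  sInf {L | limNu (fun ν => liminf (fun n =>
    sInf ((fun A : Set (Fin n → 𝒳) =>
        (X n).pr (A ∩ {x | -Real.logb (K : ℝ) ((X n).p x / (X n).pr A) / (n : ℝ)
          ≥ R + L / Real.sqrt (n : ℝ)})) ''
      {A | (X n).pr A ≥ 1 - ε - ν})) atTop) ≤ δ}

/-- A rate R is optimistically ε-achievable by fixed-length codes. -/
def FixAchR (K : ℕ) (X : Source 𝒳) (ε R : ℝ) : Prop :=
  ∃ (M : ℕ → ℕ) (φ : ∀ n, (Fin n → 𝒳) → Fin (M n)) (ψ : ∀ n, Fin (M n) → (Fin n → 𝒳)),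
    ∀ γ > (0 : ℝ), ∃ ns : ℕ → ℕ, StrictMono ns ∧ ∀ i,
      (X (ns i)).pr {x | ψ (ns i) (φ (ns i) x) ≠ x} ≤ ε + γ ∧
      Real.logb (K : ℝ) (M (ns i) : ℝ) / (ns i : ℝ) ≤ R + γ

/-- R^f(ε|X). -/
noncomputable def Rfix (K : ℕ) (X : Source 𝒳) (ε : ℝ) : ℝ :=
  sInf {R | FixAchR K X ε R}

/-- A real L is optimistically (ε,R)-achievable by fixed-length codes. -/
def FixAchL (K : ℕ) (X : Source 𝒳) (ε R L : ℝ) : Prop :=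
  ∃ (M : ℕ → ℕ) (φ : ∀ n, (Fin n → 𝒳) → Fin (M n)) (ψ : ∀ n, Fin (M n) → (Fin n → 𝒳)),
    ∀ γ > (0 : ℝ), ∃ ns : ℕ → ℕ, StrictMono ns ∧ ∀ i,
      (X (ns i)).pr {x | ψ (ns i) (φ (ns i) x) ≠ x} ≤ ε + γ ∧
      Real.logb (K : ℝ) ((M (ns i) : ℝ) / (K : ℝ) ^ ((ns i : ℝ) * R)) / Real.sqrt (ns i : ℝ)
        ≤ L + γ

/-- L^f(ε,R|X). -/
noncomputable def Lfix (K : ℕ) (X : Source 𝒳) (ε R : ℝ) : ℝ :=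
  sInf {L | FixAchL K X ε R L}

section Statement8Aux

variable {α : Type*}

lemma Dist.summable' (P : Dist α) : Summable P.p := P.hasSum.summable

lemma Dist.p_le_one' (P : Dist α) (x : α) : P.p x ≤ 1 :=
  le_hasSum P.hasSum x (fun y _ => P.nonneg y)

lemma pr_eq (P : Dist α) (A : Set α) : P.pr A = ∑' x, A.indicator P.p x :=
  tsum_subtype A P.p

lemma pr_nonneg (P : Dist α) (A : Set α) : 0 ≤ P.pr A :=
  tsum_nonneg (fun x => P.nonneg x)

lemma pr_mono (P : Dist α) {A B : Set α} (h : A ⊆ B) : P.pr A ≤ P.pr B := by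
  rw [pr_eq, pr_eq]
  exact Summable.tsum_le_tsum
    (fun x => Set.indicator_le_indicator_of_subset h (fun y => P.nonneg y) x)
    (P.summable'.indicator A) (P.summable'.indicator B)

lemma pr_univ (P : Dist α) : P.pr Set.univ = 1 := by
  rw [Dist.pr, tsum_univ]
  exact P.hasSum.tsum_eq

lemma pr_le_one (P : Dist α) (A : Set α) : P.pr A ≤ 1 := by
  rw [← pr_univ P]; exact pr_mono P (Set.subset_univ A)

lemma pr_union_disjoint (P : Dist α) {A B : Set α} (h : Disjoint A B) :
    P.pr (A ∪ B) = P.pr A + P.pr B := by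
  rw [pr_eq, pr_eq, pr_eq, Set.indicator_union_of_disjoint h P.p]
  exact Summable.tsum_add (P.summable'.indicator A) (P.summable'.indicator B)

lemma pr_union_le (P : Dist α) (A B : Set α) : P.pr (A ∪ B) ≤ P.pr A + P.pr B := by
  rw [pr_eq, pr_eq, pr_eq, ← Summable.tsum_add (P.summable'.indicator A) (P.summable'.indicator B)]
  refine Summable.tsum_le_tsum (fun x => ?_) (P.summable'.indicator _)
    ((P.summable'.indicator A).add (P.summable'.indicator B))
  by_cases hA : x ∈ A <;> by_cases hB : x ∈ B <;>
    simp [Set.indicator_apply, hA, hB, P.nonneg x]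

lemma pr_compl (P : Dist α) (A : Set α) : P.pr Aᶜ = 1 - P.pr A := by
  have h := pr_union_disjoint P (disjoint_compl_right (a := A))
  rw [Set.union_compl_self, pr_univ] at h
  linarith

lemma pr_finset (P : Dist α) (F : Finset α) : P.pr ↑F = ∑ x ∈ F, P.p x :=
  F.tsum_subtype P.p

lemma finset_select {f : α → ℝ} {m t : ℝ} (hm : 0 ≤ m)
    (hfm : ∀ x, 0 ≤ f x ∧ f x ≤ m) (ht : 0 ≤ t) (F : Finset α) (hF : t ≤ ∑ x ∈ F, f x) :
    ∃ G ⊆ F, t ≤ ∑ x ∈ G, f x ∧ ∑ x ∈ G, f x ≤ t + m := by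
  classical
  induction F using Finset.strongInduction with
  | _ F ih =>
    by_cases hle : ∑ x ∈ F, f x ≤ t + m
    · exact ⟨F, Finset.Subset.refl F, hF, hle⟩
    · push_neg at hle
      have hFne : F.Nonempty := by
        rcases F.eq_empty_or_nonempty with h | h
        · exfalso; rw [h, Finset.sum_empty] at hle; linarith
        · exact h
      obtain ⟨x, hx⟩ := hFne
      have hsum : ∑ y ∈ F.erase x, f y + f x = ∑ y ∈ F, f y := Finset.sum_erase_add F f hx
      have h2 : t ≤ ∑ y ∈ F.erase x, f y := by
        have := (hfm x).2; linarith
      obtain ⟨G, hG, h3, h4⟩ := ih (F.erase x) (Finset.erase_ssubset hx) h2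
      exact ⟨G, hG.trans (Finset.erase_subset x F), h3, h4⟩

lemma pr_select (P : Dist α) (B : Set α) {m t : ℝ} (hm : 0 < m)
    (hB : ∀ x ∈ B, P.p x ≤ m) (ht0 : 0 ≤ t) (htB : t ≤ P.pr B) :
    ∃ S ⊆ B, t ≤ P.pr S ∧ P.pr S ≤ t + m := by
  classical
  by_cases hc : P.pr B ≤ t + m
  · exact ⟨B, subset_rfl, htB, hc⟩
  · push_neg at hc
    set f := B.indicator P.p with hf
    have hfs : Summable f := P.summable'.indicator B
    have hlt : t < ∑' x, f x := by rw [← pr_eq]; linarith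
    have hev : ∀ᶠ F in atTop, t < ∑ x ∈ F, f x :=
      hfs.hasSum.eventually (eventually_gt_nhds hlt)
    obtain ⟨F₀, hF₀⟩ := hev.exists
    have hfm : ∀ x, 0 ≤ f x ∧ f x ≤ m := by
      intro x
      by_cases hx : x ∈ B
      · simp only [hf, Set.indicator_of_mem hx]
        exact ⟨P.nonneg x, hB x hx⟩
      · simp only [hf, Set.indicator_of_notMem hx]
        exact ⟨le_refl 0, hm.le⟩
    obtain ⟨G, hGF, h1, h2⟩ := finset_select hm.le hfm ht0 F₀ hF₀.le
    refine ⟨↑(G.filter (· ∈ B)), ?_, ?_, ?_⟩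
    · intro x hx
      simp only [Finset.coe_filter, Set.mem_setOf_eq] at hx
      exact hx.2
    all_goals
      rw [pr_finset, Finset.sum_filter]
      have : ∑ x ∈ G, (if x ∈ B then P.p x else 0) = ∑ x ∈ G, f x := by
        refine Finset.sum_congr rfl (fun x _ => ?_)
        simp [hf, Set.indicator_apply]
    · rw [this]; exact h1
    · rw [this]; exact h2

/-- The Hbar-type set is contained (after relaxation) in the Fspec ≥-set. -/
lemma gt_subset_ge {K : ℕ} (P : Dist α) (n : ℕ) {R R' : ℝ} (h : R' ≤ R) :
    {x | Real.logb (K : ℝ) (1 / P.p x) / (n : ℝ) > R}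
      ⊆ {x | -Real.logb (K : ℝ) (P.p x) / (n : ℝ) ≥ R'} := by
  intro x hx
  simp only [Set.mem_setOf_eq, one_div, Real.logb_inv] at hx ⊢
  linarith

lemma ge_subset_gt {K : ℕ} (P : Dist α) (n : ℕ) {R R' : ℝ} (h : R < R') :
    {x | -Real.logb (K : ℝ) (P.p x) / (n : ℝ) ≥ R'}
      ⊆ {x | Real.logb (K : ℝ) (1 / P.p x) / (n : ℝ) > R} := by
  intro x hx
  simp only [Set.mem_setOf_eq, one_div, Real.logb_inv] at hx ⊢
  linarith

/-- Membership of the image index set. -/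
lemma univ_mem_image {𝒳 : Type*} (P : Dist (Fin n → 𝒳)) {ε : ℝ} (hε : 0 ≤ ε) :
    (Set.univ : Set (Fin n → 𝒳)) ∈ {A | P.pr A ≥ 1 - ε} := by
  simp only [Set.mem_setOf_eq, pr_univ]
  linarith

end Statement8Aux
section Statement8Main

variable {𝒳 : Type*}

noncomputable def innerF (K : ℕ) (X : Source 𝒳) (ε R : ℝ) (n : ℕ) : ℝ :=
  sInf ((fun A : Set (Fin n → 𝒳) =>
      (X n).pr (A ∩ {x | -Real.logb (K : ℝ) ((X n).p x) / (n : ℝ) ≥ R})) ''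
    {A | (X n).pr A ≥ 1 - ε})

lemma Fspec_eq (K : ℕ) (X : Source 𝒳) (ε R : ℝ) :
    Fspec K X ε R = limsup (innerF K X ε R) atTop := rfl

lemma innerF_le (K : ℕ) (X : Source 𝒳) (ε R : ℝ) (n : ℕ) {A : Set (Fin n → 𝒳)}
    (hA : (X n).pr A ≥ 1 - ε) :
    innerF K X ε R n
      ≤ (X n).pr (A ∩ {x | -Real.logb (K : ℝ) ((X n).p x) / (n : ℝ) ≥ R}) :=
  csInf_le ⟨0, by rintro v ⟨A', -, rfl⟩; exact pr_nonneg _ _⟩ ⟨A, hA, rfl⟩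

lemma innerF_nonneg (K : ℕ) (X : Source 𝒳) {ε : ℝ} (hε0 : 0 ≤ ε) (R : ℝ) (n : ℕ) :
    0 ≤ innerF K X ε R n := by
  refine le_csInf ⟨_, ⟨Set.univ, univ_mem_image (X n) hε0, rfl⟩⟩ ?_
  rintro v ⟨A', -, rfl⟩; exact pr_nonneg _ _

lemma innerF_le_one (K : ℕ) (X : Source 𝒳) {ε : ℝ} (hε0 : 0 ≤ ε) (R : ℝ) (n : ℕ) :
    innerF K X ε R n ≤ 1 :=
  le_trans (innerF_le K X ε R n (univ_mem_image (X n) hε0)) (pr_le_one _ _)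

/-- Step 2: the Fspec set is contained in the Hbar set. -/
lemma lemB (K : ℕ) (X : Source 𝒳) {ε δ R : ℝ} (hε0 : 0 ≤ ε)
    (h : Fspec K X ε R ≤ δ) :
    limsup (fun n =>
      (X n).pr {x | Real.logb (K : ℝ) (1 / (X n).p x) / (n : ℝ) > R}) atTop ≤ ε + δ := by
  refine le_of_forall_pos_le_add (fun γ hγ => ?_)
  have hbdd : IsBoundedUnder (· ≤ ·) atTop (innerF K X ε R) :=
    isBoundedUnder_of ⟨1, fun n => innerF_le_one K X hε0 R n⟩
  have hlt : limsup (innerF K X ε R) atTop < δ + γ := by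
    rw [← Fspec_eq]; linarith
  have hev := eventually_lt_of_limsup_lt hlt hbdd
  refine limsup_le_of_le (isCoboundedUnder_le_of_le atTop (fun n => pr_nonneg _ _)) ?_
  filter_upwards [hev] with n hn
  rw [innerF] at hn
  obtain ⟨v, ⟨A, hA, rfl⟩, hvlt⟩ :=
    exists_lt_of_csInf_lt
      (Set.nonempty_of_mem (Set.mem_image_of_mem _ (univ_mem_image (X n) hε0))) hn
  have h1 : (X n).pr {x | Real.logb (K : ℝ) (1 / (X n).p x) / (n : ℝ) > R}
      ≤ (X n).pr {x | -Real.logb (K : ℝ) ((X n).p x) / (n : ℝ) ≥ R} :=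
    pr_mono _ (gt_subset_ge (X n) n (le_refl R))
  have h2 : (X n).pr {x | -Real.logb (K : ℝ) ((X n).p x) / (n : ℝ) ≥ R}
      ≤ (X n).pr (A ∩ {x | -Real.logb (K : ℝ) ((X n).p x) / (n : ℝ) ≥ R}) + (X n).pr Aᶜ := by
    refine le_trans (pr_mono _ ?_) (pr_union_le _ _ _)
    intro x hx
    by_cases hxA : x ∈ A
    · exact Or.inl ⟨hxA, hx⟩
    · exact Or.inr hxA
  have h3 : (X n).pr Aᶜ ≤ ε := by
    rw [pr_compl]
    simp only [Set.mem_setOf_eq, ge_iff_le] at hA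
    linarith
  linarith

/-- Any member of the Hbar set is nonnegative. -/
lemma lemA (K : ℕ) (hK : 2 ≤ K) (X : Source 𝒳) {c R : ℝ} (hc : c < 1)
    (h : limsup (fun n =>
      (X n).pr {x | Real.logb (K : ℝ) (1 / (X n).p x) / (n : ℝ) > R}) atTop ≤ c) :
    0 ≤ R := by
  by_contra hR
  push_neg at hR
  have hK1 : (1 : ℝ) < K := by
    have : (2 : ℝ) ≤ K := by exact_mod_cast hK
    linarith
  have hset : ∀ n : ℕ,
      {x : Fin n → 𝒳 | Real.logb (K : ℝ) (1 / (X n).p x) / (n : ℝ) > R} = Set.univ := by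
    intro n
    refine Set.eq_univ_of_forall (fun x => ?_)
    have hnum : 0 ≤ Real.logb (K : ℝ) (1 / (X n).p x) := by
      rcases eq_or_lt_of_le ((X n).nonneg x) with h0 | h0
      · rw [← h0]
        simp
      · refine Real.logb_nonneg hK1 ?_
        rw [le_div_iff₀ h0, one_mul]
        exact (X n).p_le_one' x
    have hq : (0 : ℝ) ≤ Real.logb (K : ℝ) (1 / (X n).p x) / (n : ℝ) :=
      div_nonneg hnum (Nat.cast_nonneg n)
    exact lt_of_lt_of_le hR hq
  have hfun : (fun n => (X n).pr
      {x | Real.logb (K : ℝ) (1 / (X n).p x) / (n : ℝ) > R}) = fun _ => (1 : ℝ) := by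
    funext n
    rw [hset n, pr_univ]
  rw [hfun, limsup_const] at h
  linarith

/-- Step 3: from membership in the Hbar set, R + η is in the Fspec set. -/
lemma lemC (K : ℕ) (hK : 2 ≤ K) (X : Source 𝒳) {ε δ R η : ℝ}
    (hε0 : 0 ≤ ε) (hδ0 : 0 ≤ δ) (hεδ : ε + δ < 1) (hη : 0 < η)
    (h : limsup (fun n =>
      (X n).pr {x | Real.logb (K : ℝ) (1 / (X n).p x) / (n : ℝ) > R}) atTop ≤ ε + δ) :
    Fspec K X ε (R + η) ≤ δ := by
  have hK1 : (1 : ℝ) < K := by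
    have : (2 : ℝ) ≤ K := by exact_mod_cast hK
    linarith
  have hR0 : 0 ≤ R := lemA K hK X hεδ h
  rw [Fspec_eq]
  refine le_of_forall_pos_le_add (fun γ hγ => ?_)
  set r : ℝ := (K : ℝ) ^ (-(R + η)) with hr
  have hKpos : (0 : ℝ) < K := by linarith
  have hr0 : 0 < r := Real.rpow_pos_of_pos hKpos _
  have hr1 : r < 1 := Real.rpow_lt_one_of_one_lt_of_neg hK1 (by linarith)
  have hrn : Tendsto (fun n : ℕ => r ^ n) atTop (nhds 0) :=
    tendsto_pow_atTop_nhds_zero_of_lt_one hr0.le hr1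
  have hev1 : ∀ᶠ n in atTop, r ^ n < γ / 2 :=
    hrn.eventually (eventually_lt_nhds (by linarith))
  have hqb : IsBoundedUnder (· ≤ ·) atTop (fun n =>
      (X n).pr {x | Real.logb (K : ℝ) (1 / (X n).p x) / (n : ℝ) > R}) :=
    isBoundedUnder_of ⟨1, fun n => pr_le_one _ _⟩
  have hev2 : ∀ᶠ n in atTop, (X n).pr
      {x | Real.logb (K : ℝ) (1 / (X n).p x) / (n : ℝ) > R} < ε + δ + γ / 2 :=
    eventually_lt_of_limsup_lt (lt_of_le_of_lt h (by linarith)) hqb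
  refine limsup_le_of_le
    (isCoboundedUnder_le_of_le atTop (fun n => innerF_nonneg K X hε0 _ n)) ?_
  filter_upwards [hev1, hev2, eventually_ge_atTop 1] with n h1 h2 hn1
  have hnpos : (0 : ℝ) < (n : ℝ) := by exact_mod_cast hn1
  have hmass : ∀ x ∈ {x : Fin n → 𝒳 | -Real.logb (K : ℝ) ((X n).p x) / (n : ℝ) ≥ R + η},
      (X n).p x ≤ r ^ n := by
    intro x hx
    simp only [Set.mem_setOf_eq, ge_iff_le] at hx
    have hrn' : r ^ n = (K : ℝ) ^ (-(R + η) * (n : ℝ)) := by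
      rw [hr, ← Real.rpow_natCast ((K : ℝ) ^ (-(R + η))) n, ← Real.rpow_mul hKpos.le]
    rcases eq_or_lt_of_le ((X n).nonneg x) with h0 | h0
    · rw [← h0]
      positivity
    · have hlogb : Real.logb (K : ℝ) ((X n).p x) ≤ -(R + η) * (n : ℝ) := by
        rw [le_div_iff₀ hnpos] at hx
        linarith
      have := (Real.rpow_le_rpow_left_iff hK1).mpr hlogb
      rwa [Real.rpow_logb hKpos (by linarith) h0, ← hrn'] at this
  have ht0 : 0 ≤ max ((X n).pr {x | -Real.logb (K : ℝ) ((X n).p x) / (n : ℝ) ≥ R + η} - ε) 0 :=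
    le_max_right _ _
  have htB : max ((X n).pr {x | -Real.logb (K : ℝ) ((X n).p x) / (n : ℝ) ≥ R + η} - ε) 0
      ≤ (X n).pr {x | -Real.logb (K : ℝ) ((X n).p x) / (n : ℝ) ≥ R + η} :=
    max_le (by linarith) (pr_nonneg _ _)
  obtain ⟨S, hSB, hS1, hS2⟩ := pr_select (X n) _ (pow_pos hr0 n) hmass ht0 htB
  have hprA : (X n).pr ({x | -Real.logb (K : ℝ) ((X n).p x) / (n : ℝ) ≥ R + η}ᶜ ∪ S)
      = (X n).pr {x | -Real.logb (K : ℝ) ((X n).p x) / (n : ℝ) ≥ R + η}ᶜ + (X n).pr S :=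
    pr_union_disjoint (X n) (disjoint_compl_left.mono_right hSB)
  have hAmem : (X n).pr ({x | -Real.logb (K : ℝ) ((X n).p x) / (n : ℝ) ≥ R + η}ᶜ ∪ S)
      ≥ 1 - ε := by
    rw [hprA, pr_compl]
    have hm := le_max_left
      ((X n).pr {x | -Real.logb (K : ℝ) ((X n).p x) / (n : ℝ) ≥ R + η} - ε) 0
    linarith
  have hAB : ({x | -Real.logb (K : ℝ) ((X n).p x) / (n : ℝ) ≥ R + η}ᶜ ∪ S)
      ∩ {x | -Real.logb (K : ℝ) ((X n).p x) / (n : ℝ) ≥ R + η} = S := by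
    rw [Set.union_inter_distrib_right, Set.compl_inter_self, Set.empty_union,
      Set.inter_eq_left.mpr hSB]
  have hle : innerF K X ε (R + η) n ≤ (X n).pr S := by
    have h' := innerF_le K X ε (R + η) n hAmem
    rwa [hAB] at h'
  have hBq : (X n).pr {x | -Real.logb (K : ℝ) ((X n).p x) / (n : ℝ) ≥ R + η}
      ≤ (X n).pr {x | Real.logb (K : ℝ) (1 / (X n).p x) / (n : ℝ) > R} :=
    pr_mono (X n) (ge_subset_gt (X n) n (by linarith))
  have hmax : max ((X n).pr {x | -Real.logb (K : ℝ) ((X n).p x) / (n : ℝ) ≥ R + η} - ε) 0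
      ≤ δ + γ / 2 :=
    max_le (by linarith) (by linarith)
  calc innerF K X ε (R + η) n ≤ (X n).pr S := hle
    _ ≤ max ((X n).pr {x | -Real.logb (K : ℝ) ((X n).p x) / (n : ℝ) ≥ R + η} - ε) 0 + r ^ n :=
        hS2
    _ ≤ (δ + γ / 2) + γ / 2 := add_le_add hmax h1.le
    _ = δ + γ := by ring

end Statement8Main

/-- H̃_{ε,δ}(X) ≤ H̄_{ε+δ}(X). -/
theorem statement8 {𝒳 : Type*} [Countable 𝒳] (K : ℕ) (hK : 2 ≤ K) (X : Source 𝒳)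
    (ε δ : ℝ) (hε0 : 0 ≤ ε) (hε1 : ε < 1) (hδ0 : 0 ≤ δ) (hδ1 : δ < 1) (hεδ : ε + δ < 1) :
    Htilde K X ε δ ≤ Hbar K X (ε + δ) := by
  have hTS : {R | Fspec K X ε R ≤ δ} ⊆ {R | limsup (fun n =>
      (X n).pr {x | Real.logb (K : ℝ) (1 / (X n).p x) / (n : ℝ) > R}) atTop ≤ ε + δ} :=
    fun R hR => lemB K X hε0 hR
  unfold Htilde Hbar
  rcases Set.eq_empty_or_nonempty {R | limsup (fun n =>
      (X n).pr {x | Real.logb (K : ℝ) (1 / (X n).p x) / (n : ℝ) > R}) atTop ≤ ε + δ}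
    with hSe | hSne
  · have hTe : {R | Fspec K X ε R ≤ δ} = ∅ := by
      rw [Set.eq_empty_iff_forall_notMem]
      intro R hR
      have h' := hTS hR
      rw [hSe] at h'
      exact h'
    rw [hSe, hTe, Real.sInf_empty]
  · refine le_csInf hSne (fun R hR => ?_)
    refine le_of_forall_pos_le_add (fun η hη => ?_)
    have hmem : Fspec K X ε (R + η) ≤ δ := lemC K hK X hε0 hδ0 hεδ hη hR
    exact csInf_le ⟨0, fun R' hR' => lemA K hK X hεδ (hTS hR')⟩ hmem

end NY
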